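/- arXiv:2512.14886 — 2 statements merged into one kernel-verified Lean document; each statement's English description precedes it below -/
import Mathlib

section
/- Let Ĝ be a signed non-separable bigraph with bipartition (X,Y) and without isolated vertices, and let x_1,…,x_α, y_1,…,y_β be a canonical ordering of Ĝ. Suppose that Ĝ contains an induced subgraph belonging to Z_2 on vertices x_i, x_j, x_k, y_ℓ, y_q, y_r where x_i, x_j ∈ N(y_1). If no edge of Ĝ is signed simplicial, then Ĝ contains a graph in F_3 ∪ F_4 ∪ F_5 ∪ F_6 as an induced subgraph. -/
universe u

/-! ## Basic unsigned notions for bipartite graphs -/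

/-- `G` has an induced cycle of length at least 6 (signs, if any, are arbitrary). -/
def HasLongInducedCycle {V : Type u} (G : SimpleGraph V) : Prop :=
  ∃ n : ℕ, 6 ≤ n ∧ ∃ f : ZMod n → V, Function.Injective f ∧
    ∀ i j : ZMod n, G.Adj (f i) (f j) ↔ (j = i + 1 ∨ i = j + 1)

/-- A graph is separable if it contains an induced `2K₂`. -/
def IsSeparableGraph {V : Type u} (G : SimpleGraph V) : Prop :=
  ∃ a b c d : V, [a, b, c, d].Pairwise (· ≠ ·) ∧
    G.Adj a b ∧ G.Adj c d ∧ ¬ G.Adj a c ∧ ¬ G.Adj a d ∧ ¬ G.Adj b c ∧ ¬ G.Adj b d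

/-- An edge `ab` of a bipartite graph is simplicial if every vertex of `N(a) - {b}`
is adjacent to every vertex of `N(b) - {a}`. -/
def SimplicialEdge {V : Type u} (G : SimpleGraph V) (a b : V) : Prop :=
  G.Adj a b ∧ ∀ c ∈ G.neighborSet a \ {b}, ∀ d ∈ G.neighborSet b \ {a}, G.Adj c d

/-- A canonical ordering of a bigraph with bipartition given by `side`
(`X` is the `side = true` part, `Y` the `side = false` part): the neighbourhoods of
the `x`'s are decreasing and those of the `y`'s are increasing. -/
def IsCanonicalOrdering {V : Type u} (G : SimpleGraph V) (side : V → Bool)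
    {α β : ℕ} (x : Fin α → V) (y : Fin β → V) : Prop :=
  Function.Injective x ∧ Function.Injective y ∧
  (∀ w : V, side w = true ↔ w ∈ Set.range x) ∧
  (∀ w : V, side w = false ↔ w ∈ Set.range y) ∧
  (∀ i j : Fin α, i ≤ j → G.neighborSet (x j) ⊆ G.neighborSet (x i)) ∧
  (∀ i j : Fin β, i ≤ j → G.neighborSet (y i) ⊆ G.neighborSet (y j))

/-- `H` is a non-trivial (i.e. containing at least one edge) connected component
of `G - S`. -/
def IsNontrivialComponentOf {V : Type u} (G : SimpleGraph V) (S H : Set V) : Prop :=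
  H ⊆ Sᶜ ∧ (G.induce H).Connected ∧
  (∀ a ∈ H, ∀ b ∈ Sᶜ, G.Adj a b → b ∈ H) ∧
  (∃ a ∈ H, ∃ b ∈ H, G.Adj a b)

/-- `S` minimally separates the non-trivial components `H` and `H'` of `G - S`:
every vertex of `S` has a neighbour in `H` and a neighbour in `H'`. -/
def MinimallySeparates {V : Type u} (G : SimpleGraph V) (S H H' : Set V) : Prop :=
  IsNontrivialComponentOf G S H ∧ IsNontrivialComponentOf G S H' ∧ H ≠ H' ∧
  ∀ s ∈ S, (∃ a ∈ H, G.Adj s a) ∧ (∃ a ∈ H', G.Adj s a)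

/-! ## Signed bigraphs -/

/-- A signed bigraph: a bipartite graph (with bipartition recorded by `side`)
whose edges carry a sign (`true` = positive, `false` = negative). -/
structure SignedBigraph (V : Type u) where
  graph : SimpleGraph V
  sign : V → V → Bool
  sign_symm : ∀ a b : V, sign a b = sign b a
  side : V → Bool
  bipartite : ∀ ⦃a b : V⦄, graph.Adj a b → side a ≠ side b

namespace SignedBigraph

variable {V : Type u}

def Adj (G : SignedBigraph V) (a b : V) : Prop := G.graph.Adj a b

/-- `N(ab) = (N(a) ∪ N(b)) - {a, b}`. -/
def edgeNbhd (G : SignedBigraph V) (a b : V) : Set V :=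
  (G.graph.neighborSet a ∪ G.graph.neighborSet b) \ {a, b}

/-- The edge `ab` is signed simplicial: `N(ab)` induces a positive biclique. -/
def SignedSimplicial (G : SignedBigraph V) (a b : V) : Prop :=
  G.Adj a b ∧
    ∀ c ∈ G.edgeNbhd a b, ∀ d ∈ G.edgeNbhd a b,
      G.side c ≠ G.side d → (G.Adj c d ∧ G.sign c d = true)

/-- Delete a set of edges from a signed bigraph (keeping all vertices). -/
def deleteEdges (G : SignedBigraph V) (s : Set (Sym2 V)) : SignedBigraph V where
  graph := G.graph.deleteEdges s
  sign := G.sign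
  sign_symm := G.sign_symm
  side := G.side
  bipartite := by
    intro a b h
    exact G.bipartite (SimpleGraph.deleteEdges_adj.mp h).1

/-- The induced signed subgraph on a set of vertices. -/
def induce (G : SignedBigraph V) (A : Set V) : SignedBigraph A where
  graph := G.graph.induce A
  sign a b := G.sign a b
  sign_symm a b := G.sign_symm a b
  side a := G.side a
  bipartite := by
    intro a b h
    exact G.bipartite h

/-- A chordal signed bigraph: the edges can be ordered `e₁, …, e_m` so that each `eᵢ`
is a signed simplicial edge of the signed bigraph obtained by deleting `e₁, …, e_{i-1}`. -/
def IsChordal (G : SignedBigraph V) : Prop :=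
  ∃ l : List (Sym2 V), l.Nodup ∧ (∀ e, e ∈ G.graph.edgeSet ↔ e ∈ l) ∧
    ∀ (i : ℕ) (h : i < l.length), ∃ a b : V,
      l.get ⟨i, h⟩ = s(a, b) ∧
      (G.deleteEdges {e | e ∈ l.take i}).SignedSimplicial a b

/-! ## Forbidden patterns F₁ – F₆, D, long cycles -/

/-- `G` contains the all-negative 4-cycle `F₁` as an induced subgraph. -/
def HasF1 (G : SignedBigraph V) : Prop :=
  ∃ u1 u2 v1 v2 : V,
    [u1, u2, v1, v2].Pairwise (· ≠ ·) ∧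
    G.Adj u1 v1 ∧ G.Adj u1 v2 ∧ G.Adj u2 v1 ∧ G.Adj u2 v2 ∧
    ¬ G.Adj u1 u2 ∧ ¬ G.Adj v1 v2 ∧
    G.sign u1 v1 = false ∧ G.sign u1 v2 = false ∧
    G.sign u2 v1 = false ∧ G.sign u2 v2 = false

/-- `G` contains a member of `F₂` (a signed `K_{2,3}`) as an induced subgraph. -/
def HasF2 (G : SignedBigraph V) : Prop :=
  ∃ u1 u2 v1 v2 v3 : V,
    [u1, u2, v1, v2, v3].Pairwise (· ≠ ·) ∧
    G.Adj u1 v1 ∧ G.Adj u1 v2 ∧ G.Adj u1 v3 ∧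
    G.Adj u2 v1 ∧ G.Adj u2 v2 ∧ G.Adj u2 v3 ∧
    ¬ G.Adj u1 u2 ∧ ¬ G.Adj v1 v2 ∧ ¬ G.Adj v1 v3 ∧ ¬ G.Adj v2 v3 ∧
    G.sign u1 v1 = false ∧ G.sign u1 v2 = false ∧
    G.sign u2 v2 = false ∧ G.sign u2 v3 = false

/-- `G` contains a member of `F₃` (a signed `K_{2,4}`) as an induced subgraph. -/
def HasF3 (G : SignedBigraph V) : Prop :=
  ∃ u1 u2 v1 v2 v3 v4 : V,
    [u1, u2, v1, v2, v3, v4].Pairwise (· ≠ ·) ∧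
    G.Adj u1 v1 ∧ G.Adj u1 v2 ∧ G.Adj u1 v3 ∧ G.Adj u1 v4 ∧
    G.Adj u2 v1 ∧ G.Adj u2 v2 ∧ G.Adj u2 v3 ∧ G.Adj u2 v4 ∧
    ¬ G.Adj u1 u2 ∧ ¬ G.Adj v1 v2 ∧ ¬ G.Adj v1 v3 ∧ ¬ G.Adj v1 v4 ∧
    ¬ G.Adj v2 v3 ∧ ¬ G.Adj v2 v4 ∧ ¬ G.Adj v3 v4 ∧
    G.sign u1 v1 = false ∧ G.sign u1 v2 = false ∧
    G.sign u2 v3 = false ∧ G.sign u2 v4 = false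

/-- `G` contains a member of `F₄` (a signed `K_{3,3}` with negative perfect matching)
as an induced subgraph. -/
def HasF4 (G : SignedBigraph V) : Prop :=
  ∃ u1 u2 u3 v1 v2 v3 : V,
    [u1, u2, u3, v1, v2, v3].Pairwise (· ≠ ·) ∧
    G.Adj u1 v1 ∧ G.Adj u1 v2 ∧ G.Adj u1 v3 ∧
    G.Adj u2 v1 ∧ G.Adj u2 v2 ∧ G.Adj u2 v3 ∧
    G.Adj u3 v1 ∧ G.Adj u3 v2 ∧ G.Adj u3 v3 ∧
    ¬ G.Adj u1 u2 ∧ ¬ G.Adj u1 u3 ∧ ¬ G.Adj u2 u3 ∧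
    ¬ G.Adj v1 v2 ∧ ¬ G.Adj v1 v3 ∧ ¬ G.Adj v2 v3 ∧
    G.sign u1 v1 = false ∧ G.sign u2 v2 = false ∧ G.sign u3 v3 = false

/-- `G` contains a member of `F₅` as an induced subgraph. -/
def HasF5 (G : SignedBigraph V) : Prop :=
  ∃ x1 x2 x3 y1 y2 y3 : V,
    [x1, x2, x3, y1, y2, y3].Pairwise (· ≠ ·) ∧
    G.Adj x1 y1 ∧ G.Adj x1 y2 ∧ ¬ G.Adj x1 y3 ∧
    G.Adj x2 y1 ∧ G.Adj x2 y2 ∧ G.Adj x2 y3 ∧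
    G.Adj x3 y1 ∧ G.Adj x3 y2 ∧ G.Adj x3 y3 ∧
    ¬ G.Adj x1 x2 ∧ ¬ G.Adj x1 x3 ∧ ¬ G.Adj x2 x3 ∧
    ¬ G.Adj y1 y2 ∧ ¬ G.Adj y1 y3 ∧ ¬ G.Adj y2 y3 ∧
    G.sign x2 y1 = false ∧ G.sign x3 y2 = false

/-- `G` contains a member of `F₆` as an induced subgraph. -/
def HasF6 (G : SignedBigraph V) : Prop :=
  ∃ x1 x2 x3 x4 y1 y2 y3 y4 : V,
    [x1, x2, x3, x4, y1, y2, y3, y4].Pairwise (· ≠ ·) ∧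
    G.Adj x1 y1 ∧ G.Adj x1 y2 ∧ ¬ G.Adj x1 y3 ∧ ¬ G.Adj x1 y4 ∧
    G.Adj x2 y1 ∧ G.Adj x2 y2 ∧ ¬ G.Adj x2 y3 ∧ ¬ G.Adj x2 y4 ∧
    G.Adj x3 y1 ∧ G.Adj x3 y2 ∧ G.Adj x3 y3 ∧ G.Adj x3 y4 ∧
    G.Adj x4 y1 ∧ G.Adj x4 y2 ∧ G.Adj x4 y3 ∧ G.Adj x4 y4 ∧
    ¬ G.Adj x1 x2 ∧ ¬ G.Adj x1 x3 ∧ ¬ G.Adj x1 x4 ∧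
    ¬ G.Adj x2 x3 ∧ ¬ G.Adj x2 x4 ∧ ¬ G.Adj x3 x4 ∧
    ¬ G.Adj y1 y2 ∧ ¬ G.Adj y1 y3 ∧ ¬ G.Adj y1 y4 ∧
    ¬ G.Adj y2 y3 ∧ ¬ G.Adj y2 y4 ∧ ¬ G.Adj y3 y4 ∧
    G.sign x1 y1 = false ∧ G.sign x2 y1 = false ∧ G.sign x3 y2 = false ∧
    G.sign x4 y3 = false ∧ G.sign x4 y4 = false

/-- `G` contains a member of `D` (a 6-cycle `x₁y₁x₂y₃x₃y₂x₁` plus a negative chord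
`x₂y₂`) as an induced subgraph. -/
def HasD (G : SignedBigraph V) : Prop :=
  ∃ x1 x2 x3 y1 y2 y3 : V,
    [x1, x2, x3, y1, y2, y3].Pairwise (· ≠ ·) ∧
    G.Adj x1 y1 ∧ G.Adj y1 x2 ∧ G.Adj x2 y3 ∧ G.Adj y3 x3 ∧
    G.Adj x3 y2 ∧ G.Adj y2 x1 ∧
    G.Adj x2 y2 ∧ G.sign x2 y2 = false ∧
    ¬ G.Adj x1 y3 ∧ ¬ G.Adj x3 y1 ∧
    ¬ G.Adj x1 x2 ∧ ¬ G.Adj x1 x3 ∧ ¬ G.Adj x2 x3 ∧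
    ¬ G.Adj y1 y2 ∧ ¬ G.Adj y1 y3 ∧ ¬ G.Adj y2 y3

/-- `G` contains an induced signed cycle of length at least 6. -/
def HasLongCycle (G : SignedBigraph V) : Prop :=
  HasLongInducedCycle G.graph

/-! ## Minimal forbidden patterns M₁ – M₅ for complete bigraphs -/

def HasM1 (G : SignedBigraph V) : Prop := G.HasF1

def HasM2 (G : SignedBigraph V) : Prop :=
  ∃ u1 u2 v1 v2 v3 : V,
    [u1, u2, v1, v2, v3].Pairwise (· ≠ ·) ∧
    G.Adj u1 v1 ∧ G.Adj u1 v2 ∧ G.Adj u1 v3 ∧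
    G.Adj u2 v1 ∧ G.Adj u2 v2 ∧ G.Adj u2 v3 ∧
    ¬ G.Adj u1 u2 ∧ ¬ G.Adj v1 v2 ∧ ¬ G.Adj v1 v3 ∧ ¬ G.Adj v2 v3 ∧
    G.sign u1 v1 = false ∧ G.sign u1 v2 = false ∧
    G.sign u2 v2 = false ∧ G.sign u2 v3 = false ∧
    G.sign u1 v3 = true ∧ G.sign u2 v1 = true

def HasM3 (G : SignedBigraph V) : Prop :=
  ∃ u1 u2 v1 v2 v3 v4 : V,
    [u1, u2, v1, v2, v3, v4].Pairwise (· ≠ ·) ∧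
    G.Adj u1 v1 ∧ G.Adj u1 v2 ∧ G.Adj u1 v3 ∧ G.Adj u1 v4 ∧
    G.Adj u2 v1 ∧ G.Adj u2 v2 ∧ G.Adj u2 v3 ∧ G.Adj u2 v4 ∧
    ¬ G.Adj u1 u2 ∧ ¬ G.Adj v1 v2 ∧ ¬ G.Adj v1 v3 ∧ ¬ G.Adj v1 v4 ∧
    ¬ G.Adj v2 v3 ∧ ¬ G.Adj v2 v4 ∧ ¬ G.Adj v3 v4 ∧
    G.sign u1 v1 = false ∧ G.sign u1 v2 = false ∧
    G.sign u2 v3 = false ∧ G.sign u2 v4 = false ∧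
    G.sign u1 v3 = true ∧ G.sign u1 v4 = true ∧
    G.sign u2 v1 = true ∧ G.sign u2 v2 = true

def HasM4 (G : SignedBigraph V) : Prop :=
  ∃ u1 u2 u3 v1 v2 v3 : V,
    [u1, u2, u3, v1, v2, v3].Pairwise (· ≠ ·) ∧
    G.Adj u1 v1 ∧ G.Adj u1 v2 ∧ G.Adj u1 v3 ∧
    G.Adj u2 v1 ∧ G.Adj u2 v2 ∧ G.Adj u2 v3 ∧
    G.Adj u3 v1 ∧ G.Adj u3 v2 ∧ G.Adj u3 v3 ∧
    ¬ G.Adj u1 u2 ∧ ¬ G.Adj u1 u3 ∧ ¬ G.Adj u2 u3 ∧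
    ¬ G.Adj v1 v2 ∧ ¬ G.Adj v1 v3 ∧ ¬ G.Adj v2 v3 ∧
    G.sign u1 v1 = false ∧ G.sign u2 v2 = false ∧ G.sign u3 v3 = false ∧
    G.sign u1 v2 = true ∧ G.sign u1 v3 = true ∧ G.sign u2 v1 = true ∧
    G.sign u2 v3 = true ∧ G.sign u3 v1 = true ∧ G.sign u3 v2 = true

def HasM5 (G : SignedBigraph V) : Prop :=
  ∃ x1 x2 x3 y1 y2 y3 : V,
    [x1, x2, x3, y1, y2, y3].Pairwise (· ≠ ·) ∧
    G.Adj x1 y1 ∧ G.Adj x1 y2 ∧ G.Adj x1 y3 ∧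
    G.Adj x2 y1 ∧ G.Adj x2 y2 ∧ G.Adj x2 y3 ∧
    G.Adj x3 y1 ∧ G.Adj x3 y2 ∧ G.Adj x3 y3 ∧
    ¬ G.Adj x1 x2 ∧ ¬ G.Adj x1 x3 ∧ ¬ G.Adj x2 x3 ∧
    ¬ G.Adj y1 y2 ∧ ¬ G.Adj y1 y3 ∧ ¬ G.Adj y2 y3 ∧
    G.sign x1 y1 = false ∧ G.sign x1 y2 = false ∧
    G.sign x2 y2 = false ∧ G.sign x3 y3 = false ∧
    G.sign x1 y3 = true ∧ G.sign x2 y1 = true ∧ G.sign x2 y3 = true ∧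
    G.sign x3 y1 = true ∧ G.sign x3 y2 = true

/-! ## The patterns W₁ – W₆ (relativized to an ambient vertex set `A`, with the
distinguished vertices being exactly the vertices in `S`). -/

def HasW1In (G : SignedBigraph V) (A S : Set V) : Prop :=
  ∃ u y x z : V, u ∈ A ∧ y ∈ A ∧ x ∈ A ∧ z ∈ A ∧
    [u, y, x, z].Pairwise (· ≠ ·) ∧
    G.Adj u y ∧ G.Adj u z ∧ G.Adj x y ∧ G.Adj x z ∧
    ¬ G.Adj u x ∧ ¬ G.Adj y z ∧
    G.sign x y = false ∧ G.sign x z = false ∧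
    x ∈ S ∧ u ∉ S ∧ y ∉ S ∧ z ∉ S

def HasW2In (G : SignedBigraph V) (A S : Set V) : Prop :=
  ∃ u y v z p : V, u ∈ A ∧ y ∈ A ∧ v ∈ A ∧ z ∈ A ∧ p ∈ A ∧
    [u, y, v, z, p].Pairwise (· ≠ ·) ∧
    G.Adj u y ∧ G.Adj u z ∧ G.Adj v y ∧ G.Adj v z ∧ G.Adj p v ∧
    ¬ G.Adj u v ∧ ¬ G.Adj y z ∧ ¬ G.Adj p u ∧ ¬ G.Adj p y ∧ ¬ G.Adj p z ∧
    G.sign v y = false ∧ G.sign v z = false ∧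
    p ∈ S ∧ u ∉ S ∧ y ∉ S ∧ v ∉ S ∧ z ∉ S

def HasW3In (G : SignedBigraph V) (A S : Set V) : Prop :=
  ∃ u y v z p : V, u ∈ A ∧ y ∈ A ∧ v ∈ A ∧ z ∈ A ∧ p ∈ A ∧
    [u, y, v, z, p].Pairwise (· ≠ ·) ∧
    G.Adj u y ∧ G.Adj u z ∧ G.Adj v y ∧ G.Adj v z ∧ G.Adj p v ∧ G.Adj p u ∧
    ¬ G.Adj u v ∧ ¬ G.Adj y z ∧ ¬ G.Adj p y ∧ ¬ G.Adj p z ∧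
    G.sign v y = false ∧ G.sign v z = false ∧ G.sign p u = false ∧
    p ∈ S ∧ u ∉ S ∧ y ∉ S ∧ v ∉ S ∧ z ∉ S

def HasW4In (G : SignedBigraph V) (A S : Set V) : Prop :=
  ∃ u y c z p q : V, u ∈ A ∧ y ∈ A ∧ c ∈ A ∧ z ∈ A ∧ p ∈ A ∧ q ∈ A ∧
    [u, y, c, z, p, q].Pairwise (· ≠ ·) ∧
    G.Adj u y ∧ G.Adj u z ∧ G.Adj c y ∧ G.Adj c z ∧ G.Adj p c ∧ G.Adj p u ∧
    G.Adj q p ∧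
    ¬ G.Adj u c ∧ ¬ G.Adj y z ∧ ¬ G.Adj p y ∧ ¬ G.Adj p z ∧
    ¬ G.Adj q u ∧ ¬ G.Adj q y ∧ ¬ G.Adj q c ∧ ¬ G.Adj q z ∧
    G.sign c y = false ∧ G.sign c z = false ∧ G.sign p u = false ∧
    q ∈ S ∧ u ∉ S ∧ y ∉ S ∧ c ∉ S ∧ z ∉ S ∧ p ∉ S

def HasW5In (G : SignedBigraph V) (A S : Set V) : Prop :=
  ∃ u y v z x : V, u ∈ A ∧ y ∈ A ∧ v ∈ A ∧ z ∈ A ∧ x ∈ A ∧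
    [u, y, v, z, x].Pairwise (· ≠ ·) ∧
    G.Adj u y ∧ G.Adj u z ∧ G.Adj v y ∧ G.Adj v z ∧ G.Adj x v ∧ G.Adj x u ∧
    ¬ G.Adj u v ∧ ¬ G.Adj y z ∧ ¬ G.Adj x y ∧ ¬ G.Adj x z ∧
    G.sign v y = false ∧ G.sign x u = false ∧
    x ∈ S ∧ y ∈ S ∧ u ∉ S ∧ v ∉ S ∧ z ∉ S

def HasW6In (G : SignedBigraph V) (A S : Set V) : Prop :=
  ∃ u y v z x : V, u ∈ A ∧ y ∈ A ∧ v ∈ A ∧ z ∈ A ∧ x ∈ A ∧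
    [u, y, v, z, x].Pairwise (· ≠ ·) ∧
    G.Adj u y ∧ G.Adj u z ∧ G.Adj v y ∧ G.Adj v z ∧ G.Adj x v ∧
    ¬ G.Adj u v ∧ ¬ G.Adj y z ∧ ¬ G.Adj x u ∧ ¬ G.Adj x y ∧ ¬ G.Adj x z ∧
    G.sign v y = false ∧
    x ∈ S ∧ y ∈ S ∧ u ∉ S ∧ v ∉ S ∧ z ∉ S

/-! ## Tadpoles, sums and joins -/

/-- The vertex set of a tadpole with heads `w, y, z` and path vertices `x`. -/
def tadVerts {n : ℕ} (w y z : V) (x : Fin n → V) : Set V :=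
  {w, y, z} ∪ Set.range x

/-- The data `(w, y, z, x)` forms an induced tadpole in `G`:
`w, y, z, x ⟨k⟩` induce a 4-cycle whose edges `x ⟨k⟩ y` and `x ⟨k⟩ z` are negative,
together with the induced path `x ⟨k⟩, x ⟨k-1⟩, …, x 0`; the vertex `x 0` is the end
and `w, y, z` are the heads.  If `t2 = true` the tadpole is of type 2: there is
additionally a negative edge from `w` to `x ⟨k-1⟩`.
(The paper's parameter `k ≥ 1` corresponds to `k + 1` here.) -/
structure IsInducedTadpole (G : SignedBigraph V) (k : ℕ) (t2 : Bool)
    (w y z : V) (x : Fin (k + 1) → V) : Prop where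
  t2_len : t2 = true → 1 ≤ k
  inj : Function.Injective x
  w_notmem : ∀ i, w ≠ x i
  y_notmem : ∀ i, y ≠ x i
  z_notmem : ∀ i, z ≠ x i
  wy : w ≠ y
  wz : w ≠ z
  yz : y ≠ z
  adj_wy : G.Adj w y
  adj_wz : G.Adj w z
  not_adj_yz : ¬ G.Adj y z
  adj_path : ∀ i j : Fin (k + 1), G.Adj (x i) (x j) ↔ (i.1 + 1 = j.1 ∨ j.1 + 1 = i.1)
  adj_y : ∀ i : Fin (k + 1), G.Adj y (x i) ↔ i.1 = k
  adj_z : ∀ i : Fin (k + 1), G.Adj z (x i) ↔ i.1 = k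
  adj_w : ∀ i : Fin (k + 1), G.Adj w (x i) ↔ (t2 = true ∧ i.1 + 1 = k)
  sign_y : ∀ i : Fin (k + 1), i.1 = k → G.sign (x i) y = false
  sign_z : ∀ i : Fin (k + 1), i.1 = k → G.sign (x i) z = false
  sign_w : ∀ i : Fin (k + 1), t2 = true → i.1 + 1 = k → G.sign w (x i) = false

/-- `G` contains a sum of two tadpoles (identified at their ends) as an induced
subgraph. -/
def HasTadpoleSum (G : SignedBigraph V) : Prop :=
  ∃ (k k' : ℕ) (t t' : Bool) (w y z w' y' z' : V)
    (x : Fin (k + 1) → V) (x' : Fin (k' + 1) → V),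
    G.IsInducedTadpole k t w y z x ∧ G.IsInducedTadpole k' t' w' y' z' x' ∧
    x 0 = x' 0 ∧
    tadVerts w y z x ∩ tadVerts w' y' z' x' = {x 0} ∧
    ∀ a ∈ tadVerts w y z x, ∀ b ∈ tadVerts w' y' z' x',
      a ≠ x 0 → b ≠ x' 0 → ¬ G.Adj a b

/-- `G` contains a join of two tadpoles as an induced subgraph: two disjoint induced
tadpoles such that the edges between them are exactly those joining the end of each
tadpole to all vertices of the other tadpole in the opposite partite set; all these
edges are positive, except that the edge from an end to the head `w` of the other
tadpole may be of either sign when that tadpole is a member of `W₁` (i.e. has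
`k = 0` and is of type 1), in which case the ends are required to be adjacent. -/
def HasTadpoleJoin (G : SignedBigraph V) : Prop :=
  ∃ (k k' : ℕ) (t t' : Bool) (w y z w' y' z' : V)
    (x : Fin (k + 1) → V) (x' : Fin (k' + 1) → V),
    G.IsInducedTadpole k t w y z x ∧ G.IsInducedTadpole k' t' w' y' z' x' ∧
    Disjoint (tadVerts w y z x) (tadVerts w' y' z' x') ∧
    (∀ a ∈ tadVerts w y z x, ∀ b ∈ tadVerts w' y' z' x',
      (G.Adj a b ↔ ((a = x 0 ∨ b = x' 0) ∧ G.side a ≠ G.side b))) ∧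
    ((k = 0 ∧ t = false) ∨ (k' = 0 ∧ t' = false) → G.side (x 0) ≠ G.side (x' 0)) ∧
    (∀ a ∈ tadVerts w y z x, ∀ b ∈ tadVerts w' y' z' x', G.Adj a b →
      ¬ (a = x 0 ∧ b = w' ∧ k' = 0 ∧ t' = false) →
      ¬ (a = w ∧ b = x' 0 ∧ k = 0 ∧ t = false) →
      G.sign a b = true)

/-- `G` contains a member of
`ℱ = F₁ ∪ F₂ ∪ F₃ ∪ F₄ ∪ F₅ ∪ F₆ ∪ 𝒞 ∪ D ∪ 𝒮 ∪ 𝒥` as an induced subgraph. -/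
def HasForbidden (G : SignedBigraph V) : Prop :=
  G.HasF1 ∨ G.HasF2 ∨ G.HasF3 ∨ G.HasF4 ∨ G.HasF5 ∨ G.HasF6 ∨
  G.HasLongCycle ∨ G.HasD ∨ G.HasTadpoleSum ∨ G.HasTadpoleJoin

/-- `G` is `ℱ`-free. -/
def FFree (G : SignedBigraph V) : Prop := ¬ G.HasForbidden

end SignedBigraph

/-! ## Concrete complete signed bipartite graphs (for the graphs M₁ – M₅) -/

/-- The complete bipartite graph on `Fin a ⊕ Fin b`. -/
def cbsGraph (a b : ℕ) : SimpleGraph (Fin a ⊕ Fin b) where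
  Adj u v := u.isLeft ≠ v.isLeft
  symm := ⟨fun _ _ h => Ne.symm h⟩
  loopless := ⟨fun _ h => h rfl⟩

def cbsSign {a b : ℕ} (sgn : Fin a → Fin b → Bool) :
    Fin a ⊕ Fin b → Fin a ⊕ Fin b → Bool
  | Sum.inl i, Sum.inr j => sgn i j
  | Sum.inr j, Sum.inl i => sgn i j
  | _, _ => true

/-- The complete signed bipartite graph with parts `Fin a`, `Fin b`, and signs given
by `sgn`. -/
def completeSignedBigraph (a b : ℕ) (sgn : Fin a → Fin b → Bool) :
    SignedBigraph (Fin a ⊕ Fin b) where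
  graph := cbsGraph a b
  sign := cbsSign sgn
  sign_symm := by
    intro u v
    cases u <;> cases v <;> rfl
  side := Sum.isLeft
  bipartite := fun _ _ h => h

/-- `M₁`: the all-negative 4-cycle. -/
def Mgraph1 : SignedBigraph (Fin 2 ⊕ Fin 2) :=
  completeSignedBigraph 2 2 (fun _ _ => false)

/-- `M₂`. -/
def Mgraph2 : SignedBigraph (Fin 2 ⊕ Fin 3) :=
  completeSignedBigraph 2 3
    (fun i j => ! decide ((i = 0 ∧ (j = 0 ∨ j = 1)) ∨ (i = 1 ∧ (j = 1 ∨ j = 2))))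

/-- `M₃`. -/
def Mgraph3 : SignedBigraph (Fin 2 ⊕ Fin 4) :=
  completeSignedBigraph 2 4
    (fun i j => ! decide ((i = 0 ∧ (j = 0 ∨ j = 1)) ∨ (i = 1 ∧ (j = 2 ∨ j = 3))))

/-- `M₄`. -/
def Mgraph4 : SignedBigraph (Fin 3 ⊕ Fin 3) :=
  completeSignedBigraph 3 3 (fun i j => ! decide ((i : ℕ) = (j : ℕ)))

/-- `M₅`. -/
def Mgraph5 : SignedBigraph (Fin 3 ⊕ Fin 3) :=
  completeSignedBigraph 3 3
    (fun i j => ! decide ((i = 0 ∧ (j = 0 ∨ j = 1)) ∨ (i = 1 ∧ j = 1) ∨ (i = 2 ∧ j = 2)))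

/-!
Since `xᵢ, xⱼ ∈ N(y₁)` and the neighbourhoods of the `y`'s increase, `xᵢ` and `xⱼ` are adjacent
to all of `Y`. Let `u` be the neighbour of `y_r` with the smallest neighbourhood; as
`N(u) ⊆ N(xₖ)`, `u` misses `yₗ` and `y_q`. The edge `u y_r` is not signed simplicial, which gives
`v ∈ N(y_r)` and `w ∈ N(u)` with `vw` not a positive edge, and `N(u) ⊆ N(v)` makes `vw` a negative
edge. Either `v` and the `Z₂` pattern span a member of `F₃ ∪ F₅`, or `v` also misses `yₗ, y_q`.
In the latter case the edge `v y_r` is not signed simplicial either, giving `a ∈ N(y_r)` and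
`b ∈ N(v)`; again `a ∈ N(y_r)` forces `a ~ w`, and a case analysis on the edge `ab` and on whether
`b = w` produces a member of `F₃ ∪ F₄ ∪ F₅ ∪ F₆`.
-/

namespace SignedBigraph

variable {V : Type u} {G : SignedBigraph V} {a b c d : V}

theorem Adj.symm (h : G.Adj a b) : G.Adj b a := SimpleGraph.Adj.symm h

theorem Adj.ne (h : G.Adj a b) : a ≠ b := G.graph.ne_of_adj h

theorem ne_of_adj_of_not_adj (ha : G.Adj c a) (hb : ¬ G.Adj c b) : a ≠ b := by
  rintro rfl
  exact hb ha

theorem side_eq_not_of_adj (h : G.Adj a b) : G.side a = !G.side b :=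
  Bool.eq_not_iff.mpr (G.bipartite h)

theorem side_eq_false_of_adj (h : G.Adj a b) (ha : G.side a = true) : G.side b = false := by
  simp [side_eq_not_of_adj h.symm, ha]

theorem side_eq_true_of_adj (h : G.Adj a b) (hb : G.side b = false) : G.side a = true := by
  simp [side_eq_not_of_adj h, hb]

theorem not_adj_of_adj_of_adj (ha : G.Adj a c) (hb : G.Adj b c) : ¬ G.Adj a b :=
  fun h => G.bipartite h ((side_eq_not_of_adj ha).trans (side_eq_not_of_adj hb).symm)

theorem ne_of_adj_of_adj_of_adj (h1 : G.Adj a b) (h2 : G.Adj b c) (h3 : G.Adj c d) : a ≠ d := by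
  rintro rfl
  exact not_adj_of_adj_of_adj h1.symm h3 h2

theorem hasF3_of_adj {u1 u2 v1 v2 v3 v4 : V} (hu : u1 ≠ u2)
    (hv12 : v1 ≠ v2) (hv13 : v1 ≠ v3) (hv14 : v1 ≠ v4)
    (hv23 : v2 ≠ v3) (hv24 : v2 ≠ v4) (hv34 : v3 ≠ v4)
    (a11 : G.Adj u1 v1) (a12 : G.Adj u1 v2) (a13 : G.Adj u1 v3) (a14 : G.Adj u1 v4)
    (a21 : G.Adj u2 v1) (a22 : G.Adj u2 v2) (a23 : G.Adj u2 v3) (a24 : G.Adj u2 v4)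
    (s11 : G.sign u1 v1 = false) (s12 : G.sign u1 v2 = false)
    (s23 : G.sign u2 v3 = false) (s24 : G.sign u2 v4 = false) :
    G.HasF3 := by
  refine ⟨u1, u2, v1, v2, v3, v4, ?_, a11, a12, a13, a14, a21, a22, a23, a24,
    not_adj_of_adj_of_adj a11 a21, not_adj_of_adj_of_adj a11.symm a12.symm,
    not_adj_of_adj_of_adj a11.symm a13.symm, not_adj_of_adj_of_adj a11.symm a14.symm,
    not_adj_of_adj_of_adj a12.symm a13.symm, not_adj_of_adj_of_adj a12.symm a14.symm,
    not_adj_of_adj_of_adj a13.symm a14.symm, s11, s12, s23, s24⟩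
  simp only [List.pairwise_cons, List.mem_cons, List.not_mem_nil, List.Pairwise.nil]
  grind [Adj.ne]

theorem hasF4_of_adj {u1 u2 u3 v1 v2 v3 : V}
    (hu12 : u1 ≠ u2) (hu13 : u1 ≠ u3) (hu23 : u2 ≠ u3)
    (hv12 : v1 ≠ v2) (hv13 : v1 ≠ v3) (hv23 : v2 ≠ v3)
    (a11 : G.Adj u1 v1) (a12 : G.Adj u1 v2) (a13 : G.Adj u1 v3)
    (a21 : G.Adj u2 v1) (a22 : G.Adj u2 v2) (a23 : G.Adj u2 v3)
    (a31 : G.Adj u3 v1) (a32 : G.Adj u3 v2) (a33 : G.Adj u3 v3)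
    (s11 : G.sign u1 v1 = false) (s22 : G.sign u2 v2 = false) (s33 : G.sign u3 v3 = false) :
    G.HasF4 := by
  refine ⟨u1, u2, u3, v1, v2, v3, ?_, a11, a12, a13, a21, a22, a23, a31, a32, a33,
    not_adj_of_adj_of_adj a11 a21, not_adj_of_adj_of_adj a11 a31, not_adj_of_adj_of_adj a21 a31,
    not_adj_of_adj_of_adj a11.symm a12.symm, not_adj_of_adj_of_adj a11.symm a13.symm,
    not_adj_of_adj_of_adj a12.symm a13.symm, s11, s22, s33⟩
  simp only [List.pairwise_cons, List.mem_cons, List.not_mem_nil, List.Pairwise.nil]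
  grind [Adj.ne]

theorem hasF5_of_adj {x1 x2 x3 y1 y2 y3 : V} (hx : x2 ≠ x3) (hy : y1 ≠ y2)
    (a11 : G.Adj x1 y1) (a12 : G.Adj x1 y2) (n13 : ¬ G.Adj x1 y3)
    (a21 : G.Adj x2 y1) (a22 : G.Adj x2 y2) (a23 : G.Adj x2 y3)
    (a31 : G.Adj x3 y1) (a32 : G.Adj x3 y2) (a33 : G.Adj x3 y3)
    (s21 : G.sign x2 y1 = false) (s32 : G.sign x3 y2 = false) :
    G.HasF5 := by
  refine ⟨x1, x2, x3, y1, y2, y3, ?_, a11, a12, n13, a21, a22, a23, a31, a32, a33,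
    not_adj_of_adj_of_adj a11 a21, not_adj_of_adj_of_adj a11 a31, not_adj_of_adj_of_adj a21 a31,
    not_adj_of_adj_of_adj a21.symm a22.symm, not_adj_of_adj_of_adj a21.symm a23.symm,
    not_adj_of_adj_of_adj a22.symm a23.symm, s21, s32⟩
  have := ne_of_adj_of_adj_of_adj a11 a21.symm a23
  simp only [List.pairwise_cons, List.mem_cons, List.not_mem_nil, List.Pairwise.nil]
  grind [Adj.ne]

theorem hasF6_of_adj {x1 x2 x3 x4 y1 y2 y3 y4 : V} (hx12 : x1 ≠ x2) (hx34 : x3 ≠ x4)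
    (hy12 : y1 ≠ y2) (hy34 : y3 ≠ y4)
    (a11 : G.Adj x1 y1) (a12 : G.Adj x1 y2) (n13 : ¬ G.Adj x1 y3) (n14 : ¬ G.Adj x1 y4)
    (a21 : G.Adj x2 y1) (a22 : G.Adj x2 y2) (n23 : ¬ G.Adj x2 y3) (n24 : ¬ G.Adj x2 y4)
    (a31 : G.Adj x3 y1) (a32 : G.Adj x3 y2) (a33 : G.Adj x3 y3) (a34 : G.Adj x3 y4)
    (a41 : G.Adj x4 y1) (a42 : G.Adj x4 y2) (a43 : G.Adj x4 y3) (a44 : G.Adj x4 y4)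
    (s11 : G.sign x1 y1 = false) (s21 : G.sign x2 y1 = false) (s32 : G.sign x3 y2 = false)
    (s43 : G.sign x4 y3 = false) (s44 : G.sign x4 y4 = false) :
    G.HasF6 := by
  refine ⟨x1, x2, x3, x4, y1, y2, y3, y4, ?_, a11, a12, n13, n14, a21, a22, n23, n24,
    a31, a32, a33, a34, a41, a42, a43, a44,
    not_adj_of_adj_of_adj a11 a21, not_adj_of_adj_of_adj a11 a31, not_adj_of_adj_of_adj a11 a41,
    not_adj_of_adj_of_adj a21 a31, not_adj_of_adj_of_adj a21 a41, not_adj_of_adj_of_adj a31 a41,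
    not_adj_of_adj_of_adj a31.symm a32.symm, not_adj_of_adj_of_adj a31.symm a33.symm,
    not_adj_of_adj_of_adj a31.symm a34.symm, not_adj_of_adj_of_adj a32.symm a33.symm,
    not_adj_of_adj_of_adj a32.symm a34.symm, not_adj_of_adj_of_adj a33.symm a34.symm,
    s11, s21, s32, s43, s44⟩
  have := ne_of_adj_of_adj_of_adj a11 a31.symm a33
  have := ne_of_adj_of_adj_of_adj a11 a31.symm a34
  have := ne_of_adj_of_adj_of_adj a21 a31.symm a33
  have := ne_of_adj_of_adj_of_adj a21 a31.symm a34
  simp only [List.pairwise_cons, List.mem_cons, List.not_mem_nil, List.Pairwise.nil]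
  grind [Adj.ne]

theorem mem_edgeNbhd : c ∈ G.edgeNbhd a b ↔ (G.Adj a c ∨ G.Adj b c) ∧ c ≠ a ∧ c ≠ b := by
  simp [edgeNbhd, Adj, not_or]

theorem exists_of_not_signedSimplicial (hab : G.Adj a b) (h : ¬ G.SignedSimplicial a b) :
    ∃ c d, G.Adj c b ∧ G.Adj a d ∧ c ≠ a ∧ d ≠ b ∧ (G.Adj c d → G.sign c d = false) := by
  simp only [SignedSimplicial, hab, true_and, not_forall, mem_edgeNbhd] at h
  obtain ⟨c, ⟨hc, hca, hcb⟩, d, ⟨hd, hda, hdb⟩, hcd, hneg⟩ := h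
  rcases hc with hac | hbc <;> rcases hd with had | hbd
  · exact absurd ((side_eq_not_of_adj hac.symm).trans (side_eq_not_of_adj had.symm).symm) hcd
  · refine ⟨d, c, hbd.symm, hac, hda, hcb, fun hdc => ?_⟩
    simpa [G.sign_symm d c, hdc.symm] using hneg
  · exact ⟨c, d, hbc.symm, had, hca, hdb, fun hcd => by simpa [hcd] using hneg⟩
  · exact absurd ((side_eq_not_of_adj hbc.symm).trans (side_eq_not_of_adj hbd.symm).symm) hcd

end SignedBigraph

namespace IsCanonicalOrdering

variable {V : Type u} {G : SignedBigraph V} {α β : ℕ} {x : Fin α → V} {y : Fin β → V}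

theorem side_x (hcan : IsCanonicalOrdering G.graph G.side x y) (m : Fin α) :
    G.side (x m) = true :=
  (hcan.2.2.1 _).2 ⟨m, rfl⟩

theorem side_y (hcan : IsCanonicalOrdering G.graph G.side x y) (n : Fin β) :
    G.side (y n) = false :=
  (hcan.2.2.2.1 _).2 ⟨n, rfl⟩

theorem adj_of_adj_zero (hcan : IsCanonicalOrdering G.graph G.side x y) (hβ : 0 < β) {a w : V}
    (ha : G.Adj a (y ⟨0, hβ⟩)) (hw : G.side w = false) : G.Adj a w := by
  obtain ⟨n, rfl⟩ := (hcan.2.2.2.1 w).1 hw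
  exact (hcan.2.2.2.2.2 _ n (Nat.zero_le _) ha.symm).symm

theorem exists_adj_forall_neighborSet_subset (hcan : IsCanonicalOrdering G.graph G.side x y)
    {r : Fin β} {a₀ : V} (h₀ : G.Adj a₀ (y r)) :
    ∃ m, G.Adj (x m) (y r) ∧
      ∀ a, G.Adj a (y r) → G.graph.neighborSet (x m) ⊆ G.graph.neighborSet a := by
  have hx : ∀ a, G.Adj a (y r) → ∃ n, x n = a := fun a ha =>
    (hcan.2.2.1 a).1 (SignedBigraph.side_eq_true_of_adj ha (hcan.side_y r))
  obtain ⟨k, rfl⟩ := hx a₀ h₀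
  obtain ⟨m, hm, hmax⟩ :=
    Set.exists_max_image {n | G.Adj (x n) (y r)} id (Set.toFinite _) ⟨k, h₀⟩
  refine ⟨m, hm, fun a ha => ?_⟩
  obtain ⟨n, rfl⟩ := hx a ha
  exact hcan.2.2.2.2.1 n m (hmax n ha)

end IsCanonicalOrdering

namespace SignedBigraph

variable {V : Type u} {G : SignedBigraph V}

/-- The vertices `xᵢ, xⱼ, yₗ, y_q, y_r` of a `Z₂` pattern, with `xᵢ, xⱼ` adjacent to all of
`Y = {w | G.side w = false}`. -/
structure Z2Base (G : SignedBigraph V) (xi xj yl yq yr : V) : Prop where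
  xi_ne_xj : xi ≠ xj
  yl_ne_yq : yl ≠ yq
  side_yl : G.side yl = false
  side_yq : G.side yq = false
  side_yr : G.side yr = false
  adj_xi : ∀ w, G.side w = false → G.Adj xi w
  adj_xj : ∀ w, G.side w = false → G.Adj xj w
  sign_xi_yl : G.sign xi yl = false
  sign_xi_yq : G.sign xi yq = false
  sign_xj_yr : G.sign xj yr = false

namespace Z2Base

variable {xi xj yl yq yr u v v' w : V}

theorem hasF3_or_hasF5_or_not_adj (B : G.Z2Base xi xj yl yq yr)
    (hu : G.side u = true) (hur : G.Adj u yr) (hul : ¬ G.Adj u yl) (huq : ¬ G.Adj u yq)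
    (huw : G.Adj u w) (hwr : w ≠ yr)
    (hvr : G.Adj v yr) (hvw : G.Adj v w) (hsvw : G.sign v w = false) :
    G.HasF3 ∨ G.HasF5 ∨ ¬ G.Adj v yl ∧ ¬ G.Adj v yq := by
  have hw : G.side w = false := side_eq_false_of_adj huw hu
  by_cases hvj : v = xj
  · rw [hvj] at hvw hsvw
    exact Or.inl (hasF3_of_adj B.xi_ne_xj B.yl_ne_yq (ne_of_adj_of_not_adj hur hul).symm
      (ne_of_adj_of_not_adj huw hul).symm (ne_of_adj_of_not_adj hur huq).symm
      (ne_of_adj_of_not_adj huw huq).symm hwr.symm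
      (B.adj_xi _ B.side_yl) (B.adj_xi _ B.side_yq) (B.adj_xi _ B.side_yr) (B.adj_xi _ hw)
      (B.adj_xj _ B.side_yl) (B.adj_xj _ B.side_yq) (B.adj_xj _ B.side_yr) hvw
      B.sign_xi_yl B.sign_xi_yq B.sign_xj_yr hsvw)
  have hF5 : ∀ z, G.side z = false → G.Adj v z → ¬ G.Adj u z → G.HasF5 := fun z hz hvz huz =>
    hasF5_of_adj hvj hwr huw hur huz hvw hvr hvz
      (B.adj_xj _ hw) (B.adj_xj _ B.side_yr) (B.adj_xj _ hz) hsvw B.sign_xj_yr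
  by_cases hvl : G.Adj v yl
  · exact Or.inr (Or.inl (hF5 yl B.side_yl hvl hul))
  by_cases hvq : G.Adj v yq
  · exact Or.inr (Or.inl (hF5 yq B.side_yq hvq huq))
  exact Or.inr (Or.inr ⟨hvl, hvq⟩)

theorem hasF6 (B : G.Z2Base xi xj yl yq yr) (hvv' : v ≠ v') (hw : G.side w = false)
    (hwr : w ≠ yr) (hvr : G.Adj v yr) (hv'r : G.Adj v' yr) (hvw : G.Adj v w) (hv'w : G.Adj v' w)
    (hvl : ¬ G.Adj v yl) (hvq : ¬ G.Adj v yq) (hv'l : ¬ G.Adj v' yl) (hv'q : ¬ G.Adj v' yq)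
    (hsvw : G.sign v w = false) (hsv'w : G.sign v' w = false) :
    G.HasF6 :=
  hasF6_of_adj B.yl_ne_yq.symm hwr.symm B.xi_ne_xj hvv'
    (B.adj_xi _ B.side_yq).symm (B.adj_xj _ B.side_yq).symm (hvq ·.symm) (hv'q ·.symm)
    (B.adj_xi _ B.side_yl).symm (B.adj_xj _ B.side_yl).symm (hvl ·.symm) (hv'l ·.symm)
    (B.adj_xi _ B.side_yr).symm (B.adj_xj _ B.side_yr).symm hvr.symm hv'r.symm
    (B.adj_xi _ hw).symm (B.adj_xj _ hw).symm hvw.symm hv'w.symm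
    ((G.sign_symm _ _).trans B.sign_xi_yq) ((G.sign_symm _ _).trans B.sign_xi_yl)
    ((G.sign_symm _ _).trans B.sign_xj_yr) ((G.sign_symm _ _).trans hsvw)
    ((G.sign_symm _ _).trans hsv'w)

theorem hasF_of_sign_eq_false (B : G.Z2Base xi xj yl yq yr)
    (hss : ∀ a b : V, ¬ G.SignedSimplicial a b)
    (hv : G.side v = true) (hvr : G.Adj v yr) (hvl : ¬ G.Adj v yl) (hvq : ¬ G.Adj v yq)
    (hvw : G.Adj v w) (hwr : w ≠ yr) (hsvw : G.sign v w = false)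
    (hw : ∀ a, G.Adj a yr → G.Adj a w) :
    G.HasF3 ∨ G.HasF4 ∨ G.HasF5 ∨ G.HasF6 := by
  obtain ⟨a, b, har, hvb, hav, hbr, hsab⟩ := exists_of_not_signedSimplicial hvr (hss v yr)
  have hvj : v ≠ xj := by
    rintro rfl
    exact hvl (B.adj_xj _ B.side_yl)
  have hws := side_eq_false_of_adj hvw hv
  have hb := side_eq_false_of_adj hvb hv
  by_cases hab : G.Adj a b
  · rcases B.hasF3_or_hasF5_or_not_adj hv hvr hvl hvq hvb hbr har hab (hsab hab)
      with h | h | ⟨hal, haq⟩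
    · exact Or.inl h
    · exact Or.inr (Or.inr (Or.inl h))
    by_cases hbw : b = w
    · rw [hbw] at hab hsab
      exact Or.inr (Or.inr (Or.inr (B.hasF6 hav.symm hws hwr hvr har hvw hab hvl hvq hal haq
        hsvw (hsab hab))))
    have hja : xj ≠ a := by
      rintro rfl
      exact hal (B.adj_xj _ B.side_yl)
    exact Or.inr (Or.inl (hasF4_of_adj hvj hav.symm hja hwr (Ne.symm hbw) hbr.symm
      hvw hvr hvb (B.adj_xj _ hws) (B.adj_xj _ B.side_yr) (B.adj_xj _ hb) (hw a har) har hab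
      hsvw B.sign_xj_yr (hsab hab)))
  · exact Or.inr (Or.inr (Or.inl (hasF5_of_adj hvj hwr (hw a har) har hab hvw hvr hvb
      (B.adj_xj _ hws) (B.adj_xj _ B.side_yr) (B.adj_xj _ hb) hsvw B.sign_xj_yr)))

end Z2Base

end SignedBigraph

open SignedBigraph in
theorem hasF_of_Z2_general
    {V : Type u} (G : SignedBigraph V)
    {α β : ℕ} (x : Fin α → V) (y : Fin β → V)
    (hcan : IsCanonicalOrdering G.graph G.side x y)
    (hβ : 0 < β)
    (i j k : Fin α) (l q r : Fin β)
    -- xᵢ, xⱼ ∈ N(y₁)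
    (hi1 : G.Adj (x i) (y ⟨0, hβ⟩)) (hj1 : G.Adj (x j) (y ⟨0, hβ⟩))
    -- the Z₂ pattern on xᵢ, xⱼ, xₖ, yₗ, y_q, y_r
    (hij : i ≠ j)
    (hlq : l ≠ q)
    (e7 : G.Adj (x k) (y r))
    (ne1 : ¬ G.Adj (x k) (y l)) (ne2 : ¬ G.Adj (x k) (y q))
    (s1 : G.sign (x i) (y l) = false) (s2 : G.sign (x i) (y q) = false)
    (s3 : G.sign (x j) (y r) = false)
    -- no edge of G is signed simplicial
    (hss : ∀ a b : V, ¬ G.SignedSimplicial a b) :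
    G.HasF3 ∨ G.HasF4 ∨ G.HasF5 ∨ G.HasF6 := by
  have B : G.Z2Base (x i) (x j) (y l) (y q) (y r) :=
    ⟨hcan.1.ne hij, hcan.2.1.ne hlq, hcan.side_y l, hcan.side_y q, hcan.side_y r,
      fun _ => hcan.adj_of_adj_zero hβ hi1, fun _ => hcan.adj_of_adj_zero hβ hj1, s1, s2, s3⟩
  obtain ⟨m, hmr, hm⟩ := hcan.exists_adj_forall_neighborSet_subset e7
  obtain ⟨v, w, hvr, hmw, -, hwr, hsvw⟩ := exists_of_not_signedSimplicial hmr (hss _ _)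
  have hvw : G.Adj v w := hm v hvr hmw
  rcases B.hasF3_or_hasF5_or_not_adj (hcan.side_x m) hmr (ne1 <| hm _ e7 ·) (ne2 <| hm _ e7 ·)
      hmw hwr hvr hvw (hsvw hvw) with h | h | ⟨hvl, hvq⟩
  · exact Or.inl h
  · exact Or.inr (Or.inr (Or.inl h))
  exact B.hasF_of_sign_eq_false hss (side_eq_true_of_adj hvr (hcan.side_y r)) hvr hvl hvq hvw hwr
    (hsvw hvw) fun a ha => hm a ha hmw

open SignedBigraph in
/-- Lemma 3.4: if a signed non-separable bigraph without isolated
vertices and without signed simplicial edges contains a member of `Z₂` induced by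
`xᵢ, xⱼ, xₖ, yₗ, y_q, y_r` with `xᵢ, xⱼ ∈ N(y₁)`, then it contains a member of
`F₃ ∪ F₄ ∪ F₅ ∪ F₆` as an induced subgraph. -/
theorem hasF_of_Z2
    {V : Type u} (G : SignedBigraph V)
    (hns : ¬ IsSeparableGraph G.graph)
    (hiso : ∀ v : V, ∃ w : V, G.Adj v w)
    {α β : ℕ} (x : Fin α → V) (y : Fin β → V)
    (hcan : IsCanonicalOrdering G.graph G.side x y)
    (hβ : 0 < β)
    (i j k : Fin α) (l q r : Fin β)
    -- xᵢ, xⱼ ∈ N(y₁)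
    (hi1 : G.Adj (x i) (y ⟨0, hβ⟩)) (hj1 : G.Adj (x j) (y ⟨0, hβ⟩))
    -- the Z₂ pattern on xᵢ, xⱼ, xₖ, yₗ, y_q, y_r
    (hij : i ≠ j) (hik : i ≠ k) (hjk : j ≠ k)
    (hlq : l ≠ q) (hlr : l ≠ r) (hqr : q ≠ r)
    (e1 : G.Adj (x i) (y l)) (e2 : G.Adj (x i) (y q)) (e3 : G.Adj (x i) (y r))
    (e4 : G.Adj (x j) (y l)) (e5 : G.Adj (x j) (y q)) (e6 : G.Adj (x j) (y r))
    (e7 : G.Adj (x k) (y r))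
    (ne1 : ¬ G.Adj (x k) (y l)) (ne2 : ¬ G.Adj (x k) (y q))
    (s1 : G.sign (x i) (y l) = false) (s2 : G.sign (x i) (y q) = false)
    (s3 : G.sign (x j) (y r) = false)
    -- no edge of G is signed simplicial
    (hss : ∀ a b : V, ¬ G.SignedSimplicial a b) :
    G.HasF3 ∨ G.HasF4 ∨ G.HasF5 ∨ G.HasF6 :=
  hasF_of_Z2_general G x y hcan hβ i j k l q r hi1 hj1 hij hlq e7 ne1 ne2 s1 s2 s3 hss
end

section
/- Let Ĝ be a signed separable bigraph which does not contain any graph of 𝒞 ∪ D as an induced subgraph, and suppose a vertex set S minimally separates non-trivial components H and H' of Ĝ − S. Then S induces a positive biclique in Ĝ, and any two vertices of S lying in the same partite set of Ĝ have a common neighbour in H and a common neighbour in H'. -/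
universe u

/-!
For `a, b ∈ S`, shortest `a`–`b` paths through `H` and through `H'` are induced paths of
`G - ab` of lengths `m, m' ≥ 2`, and together they form a cycle of length `m + m'` that is induced
in `G - ab`. In a bigraph `m` and `m'` are odd when `a` and `b` lie on different sides and even
otherwise. If `a` and `b` are non-adjacent that cycle is an induced cycle of `G`, so excluding `𝒞`
forces `ab` to be an edge in the first case and `m = 2`, i.e. a common neighbour in `H`, in the
second. If `ab` is a negative edge, a path of length at least `5` closes up with `ab` into a long
induced cycle, and two paths of length `3` form a member of `D`.
-/

namespace SimpleGraph

variable {V : Type u} {W : Type*} {G : SimpleGraph V}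

structure IsInducedPath (G : SimpleGraph V) (m : ℕ) (f : ℕ → V) : Prop where
  injOn : Set.InjOn f (Set.Iic m)
  adj_iff : ∀ ⦃i j⦄, i ≤ m → j ≤ m → (G.Adj (f i) (f j) ↔ j = i + 1 ∨ i = j + 1)

structure IsInducedCycle (G : SimpleGraph V) (n : ℕ) (c : ℕ → V) : Prop where
  injOn : Set.InjOn c (Set.Iio n)
  adj_iff : ∀ ⦃i j⦄, i < n → j < n →
    (G.Adj (c i) (c j) ↔ j = i + 1 ∨ i = j + 1 ∨ (i = 0 ∧ j + 1 = n) ∨ (j = 0 ∧ i + 1 = n))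

theorem IsInducedPath.adj_succ {m : ℕ} {f : ℕ → V} (hf : G.IsInducedPath m f) {i : ℕ}
    (hi : i < m) : G.Adj (f i) (f (i + 1)) :=
  (hf.adj_iff hi.le hi).2 (Or.inl rfl)

theorem IsInducedPath.map {G' : SimpleGraph W} (φ : G ↪g G') {m : ℕ} {f : ℕ → V}
    (hf : G.IsInducedPath m f) : G'.IsInducedPath m (φ ∘ f) where
  injOn := φ.injective.injOn.comp hf.injOn (Set.mapsTo_univ _ _)
  adj_iff _ _ hi hj := by simpa using hf.adj_iff hi hj

/-- Vertex `i` of a shortest walk is at distance `i` from its start. -/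
theorem Walk.isInducedPath_getVert {u v : V} (p : G.Walk u v) (hp : p.length = G.dist u v) :
    G.IsInducedPath p.length p.getVert := by
  have hdist : ∀ i ≤ p.length, G.dist u (p.getVert i) = i := fun i hi => by
    simpa [hi] using (length_eq_dist_of_subwalk hp (p.isSubwalk_take i)).symm
  refine ⟨fun i hi j hj h => ?_, fun i j hi hj => ⟨fun hadj => ?_, ?_⟩⟩
  · rw [← hdist i hi, ← hdist j hj, h]
  · have hne : i ≠ j := by rintro rfl; exact hadj.ne rfl
    have := hadj.diff_dist_adj (u := u)
    rw [hdist i hi, hdist j hj] at this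
    omega
  · rintro (rfl | rfl)
    · exact p.adj_getVert_succ (by omega)
    · exact (p.adj_getVert_succ (by omega)).symm

theorem IsInducedCycle.hasLongInducedCycle {n : ℕ} {c : ℕ → V} (hc : G.IsInducedCycle n c)
    (hn : 6 ≤ n) : HasLongInducedCycle G := by
  have : NeZero n := ⟨by omega⟩
  have : Fact (1 < n) := ⟨by omega⟩
  have hsucc : ∀ x y : ZMod n, y = x + 1 ↔ y.val = x.val + 1 ∨ (y.val = 0 ∧ x.val + 1 = n) := by
    intro x y
    rw [← (ZMod.val_injective n).eq_iff, ZMod.val_add, ZMod.val_one]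
    have := x.val_lt
    have := y.val_lt
    rcases Nat.lt_or_ge (x.val + 1) n with h | h
    · rw [Nat.mod_eq_of_lt h]; omega
    · rw [show x.val + 1 = n by omega, Nat.mod_self]; omega
  refine ⟨n, hn, fun x => c x.val, fun x y h => ZMod.val_injective n ?_, fun x y => ?_⟩
  · exact hc.injOn x.val_lt y.val_lt h
  · rw [hc.adj_iff x.val_lt y.val_lt, hsucc, hsucc]
    omega

/-- The cycle runs along `f` from `f 0` to `f m`, then back along `f'`. -/
theorem IsInducedPath.exists_isInducedCycle {m m' : ℕ} {f f' : ℕ → V}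
    (hf : G.IsInducedPath m f) (hf' : G.IsInducedPath m' f') (hm : 2 ≤ m) (hm' : 2 ≤ m')
    (hstart : f 0 = f' 0) (hend : f m = f' m')
    (hsep : ∀ i j, 0 < i → i < m → 0 < j → j < m' → f i ≠ f' j ∧ ¬ G.Adj (f i) (f' j)) :
    ∃ c, G.IsInducedCycle (m + m') c ∧ c 0 = f 0 ∧ c m = f m := by
  set n := m + m'
  set c : ℕ → V := fun i => if i ≤ m then f i else f' (n - i)
  have hleft : ∀ i ≤ m, c i = f i := fun i hi => if_pos hi
  have hright : ∀ i, m ≤ i → c i = f' (n - i) := fun i hi => by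
    rcases hi.lt_or_eq with hi | rfl
    · exact if_neg (by omega)
    · rw [hleft m le_rfl, hend, show n - m = m' by omega]
  have key : ∀ i j, i ≤ j → j < n → (c i = c j → i = j) ∧
      (G.Adj (c i) (c j) ↔ j = i + 1 ∨ i = j + 1 ∨ (i = 0 ∧ j + 1 = n) ∨ (j = 0 ∧ i + 1 = n)) := by
    intro i j hij hj
    by_cases hjm : j ≤ m
    · rw [hleft i (by omega), hleft j hjm, hf.adj_iff (by omega) hjm]
      exact ⟨hf.injOn (by simp; omega) (by simp; omega), by omega⟩
    by_cases him : m ≤ i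
    · rw [hright i him, hright j (by omega), hf'.adj_iff (by omega) (by omega)]
      exact ⟨fun h => by have := hf'.injOn (by simp; omega) (by simp; omega) h; omega, by omega⟩
    rcases Nat.eq_zero_or_pos i with rfl | hi
    · rw [hleft 0 (by omega), hstart, hright j (by omega), hf'.adj_iff (by omega) (by omega)]
      exact ⟨fun h => by have := hf'.injOn (by simp) (by simp; omega) h; omega, by omega⟩
    · rw [hleft i (by omega), hright j (by omega)]
      obtain ⟨hne, hnadj⟩ := hsep i (n - j) hi (by omega) (by omega) (by omega)
      exact ⟨fun h => (hne h).elim, iff_of_false hnadj (by omega)⟩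
  refine ⟨c, ⟨fun i hi j hj h => ?_, fun i j hi hj => ?_⟩, hleft 0 (by omega), hleft m le_rfl⟩
  · rcases le_total i j with hij | hij
    · exact (key i j hij hj).1 h
    · exact ((key j i hij hi).1 h.symm).symm
  · rcases le_total i j with hij | hij
    · exact (key i j hij hj).2
    · rw [G.adj_comm, (key j i hij hi).2]; omega

theorem deleteEdges_singleton_eq_self {a b : V} (h : ¬ G.Adj a b) : G.deleteEdges {s(a, b)} = G :=
  deleteEdges_eq_self.2 (Set.disjoint_singleton_right.2 (by rwa [mem_edgeSet]))

/-- The path is induced in `G - ab`: the edge `ab`, if present, is its only possible chord. -/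
structure IsInducedPathThrough (G : SimpleGraph V) (T : Set V) (a b : V) (m : ℕ) (f : ℕ → V) :
    Prop where
  two_le : 2 ≤ m
  apply_zero : f 0 = a
  apply_length : f m = b
  mem : ∀ i, 0 < i → i < m → f i ∈ T
  isInducedPath : (G.deleteEdges {s(a, b)}).IsInducedPath m f

namespace IsInducedPathThrough

variable {T T' : Set V} {a b : V} {m m' : ℕ} {f f' : ℕ → V}

theorem adj_succ (hf : G.IsInducedPathThrough T a b m f) {i : ℕ} (hi : i < m) :
    G.Adj (f i) (f (i + 1)) :=
  deleteEdges_le _ (hf.isInducedPath.adj_succ hi)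

theorem isInducedCycle_of_adj (hf : G.IsInducedPathThrough T a b m f) (hab : G.Adj a b) :
    G.IsInducedCycle (m + 1) f := by
  have hinj : Set.InjOn f (Set.Iio (m + 1)) := fun i hi j hj =>
    hf.isInducedPath.injOn (Nat.lt_succ_iff.1 hi) (Nat.lt_succ_iff.1 hj)
  have ha : ∀ i < m + 1, f i = a ↔ i = 0 := fun i hi =>
    ⟨fun h => hinj hi (by simp) (h.trans hf.apply_zero.symm), fun h => h ▸ hf.apply_zero⟩
  have hb : ∀ i < m + 1, f i = b ↔ i = m := fun i hi =>
    ⟨fun h => hinj hi (by simp) (h.trans hf.apply_length.symm), fun h => h ▸ hf.apply_length⟩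
  refine ⟨hinj, fun i j hi hj => ?_⟩
  have hdel := hf.isInducedPath.adj_iff (Nat.lt_succ_iff.1 hi) (Nat.lt_succ_iff.1 hj)
  simp only [deleteEdges_adj, Set.mem_singleton_iff, Sym2.eq_iff, ha i hi, ha j hj, hb i hi,
    hb j hj] at hdel
  by_cases hend : (i = 0 ∧ j = m) ∨ (i = m ∧ j = 0)
  · rcases hend with ⟨rfl, rfl⟩ | ⟨rfl, rfl⟩
    · simp [hf.apply_zero, hf.apply_length, hab]
    · simp [hf.apply_zero, hf.apply_length, hab.symm]
  · rw [and_iff_left hend] at hdel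
    rw [hdel]
    omega

theorem exists_isInducedCycle (hf : G.IsInducedPathThrough T a b m f)
    (hf' : G.IsInducedPathThrough T' a b m' f') (hTT' : Disjoint T T')
    (hnadj : ∀ u ∈ T, ∀ v ∈ T', ¬ G.Adj u v) :
    ∃ c, (G.deleteEdges {s(a, b)}).IsInducedCycle (m + m') c ∧ c 0 = a ∧ c m = b := by
  obtain ⟨c, hc, h0, hm⟩ := hf.isInducedPath.exists_isInducedCycle hf'.isInducedPath hf.two_le
    hf'.two_le (hf.apply_zero.trans hf'.apply_zero.symm)
    (hf.apply_length.trans hf'.apply_length.symm) fun i j hi him hj hjm =>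
      ⟨hTT'.ne_of_mem (hf.mem i hi him) (hf'.mem j hj hjm),
        fun h => hnadj _ (hf.mem i hi him) _ (hf'.mem j hj hjm) (deleteEdges_le _ h)⟩
  exact ⟨c, hc, h0.trans hf.apply_zero, hm.trans hf.apply_length⟩

theorem hasLongInducedCycle (hf : G.IsInducedPathThrough T a b m f)
    (hf' : G.IsInducedPathThrough T' a b m' f') (hTT' : Disjoint T T')
    (hnadj : ∀ u ∈ T, ∀ v ∈ T', ¬ G.Adj u v) (hab : ¬ G.Adj a b) (h6 : 6 ≤ m + m') :
    HasLongInducedCycle G := by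
  obtain ⟨c, hc, -, -⟩ := hf.exists_isInducedCycle hf' hTT' hnadj
  rw [deleteEdges_singleton_eq_self hab] at hc
  exact hc.hasLongInducedCycle h6

end IsInducedPathThrough

/-- A shortest `a`–`b` walk in `G - ab` restricted to `T ∪ {a, b}`. -/
theorem exists_isInducedPathThrough {T : Set V} {a b : V} (hT : (G.induce T).Preconnected)
    (ha : a ∉ T) (hb : b ∉ T) (hab : a ≠ b) (haT : ∃ x ∈ T, G.Adj a x)
    (hbT : ∃ y ∈ T, G.Adj b y) : ∃ m f, G.IsInducedPathThrough T a b m f := by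
  set U : Set V := insert a (insert b T)
  set K := (G.deleteEdges {s(a, b)}).induce U
  have hK : ∀ x y : U, K.Adj x y ↔ G.Adj x y ∧ s((x : V), y) ≠ s(a, b) := by simp [K]
  have hT_ab : ∀ x ∈ T, ∀ y, s(x, y) ≠ s(a, b) := by
    rintro x hx y h
    rcases Sym2.eq_iff.1 h with ⟨rfl, -⟩ | ⟨rfl, -⟩
    exacts [ha hx, hb hx]
  let a' : U := ⟨a, by simp [U]⟩
  let b' : U := ⟨b, by simp [U]⟩
  let φ : G.induce T →g K :=
    ⟨fun x => ⟨x, by simp [U, x.2]⟩, fun {x y} h => (hK _ _).2 ⟨h, hT_ab _ x.2 _⟩⟩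
  have hreach : K.Reachable a' b' := by
    obtain ⟨x, hx, hax⟩ := haT
    obtain ⟨y, hy, hby⟩ := hbT
    have hax' : K.Adj a' (φ ⟨x, hx⟩) :=
      (hK _ _).2 ⟨hax, by rw [Sym2.eq_swap]; exact hT_ab x hx a⟩
    have hby' : K.Adj b' (φ ⟨y, hy⟩) :=
      (hK _ _).2 ⟨hby, by rw [Sym2.eq_swap]; exact hT_ab y hy b⟩
    exact hax'.reachable.trans (((hT ⟨x, hx⟩ ⟨y, hy⟩).map φ).trans hby'.reachable.symm)
  obtain ⟨p, hp⟩ := hreach.exists_walk_length_eq_dist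
  have hpath := (p.isInducedPath_getVert hp).map (Embedding.induce U)
  have hlen : 2 ≤ p.length := by
    have h0 := hreach.pos_dist_of_ne fun h => hab (congrArg Subtype.val h)
    have h1 : K.dist a' b' ≠ 1 := fun h => ((hK _ _).1 (dist_eq_one_iff_adj.1 h)).2 rfl
    omega
  refine ⟨p.length, fun i => p.getVert i, hlen, by simp [a'], by simp [b'], fun i hi him => ?_,
    hpath⟩
  have hva : (p.getVert i : V) ≠ a := fun h => by
    have := hpath.injOn (show i ≤ p.length by omega) (show 0 ≤ p.length by omega)
      (by simpa [a'] using h)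
    omega
  have hvb : (p.getVert i : V) ≠ b := fun h => by
    have := hpath.injOn (show i ≤ p.length by omega) (show p.length ≤ p.length from le_rfl)
      (by simpa [b'] using h)
    omega
  rcases (p.getVert i).2 with h | h | h
  exacts [(hva h).elim, (hvb h).elim, h]

end SimpleGraph

section

variable {V : Type u} {G : SimpleGraph V} {S H H' : Set V}

theorem IsNontrivialComponentOf.subset_of_mem {A B : Set V} (hA : IsNontrivialComponentOf G S A)
    (hB : IsNontrivialComponentOf G S B) {v : V} (hvA : v ∈ A) (hvB : v ∈ B) : A ⊆ B := by
  suffices ∀ x : A, (G.induce A).Reachable ⟨v, hvA⟩ x → (x : V) ∈ B from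
    fun u hu => this ⟨u, hu⟩ (hA.2.1.preconnected _ _)
  intro x hx
  rw [SimpleGraph.reachable_iff_reflTransGen] at hx
  induction hx with
  | refl => exact hvB
  | tail _ hxy ih => exact hB.2.2.1 _ ih _ (hA.1 (Subtype.prop _)) hxy

namespace MinimallySeparates

theorem symm (h : MinimallySeparates G S H H') : MinimallySeparates G S H' H :=
  ⟨h.2.1, h.1, h.2.2.1.symm, fun s hs => (h.2.2.2 s hs).symm⟩

theorem disjoint (h : MinimallySeparates G S H H') : Disjoint H H' :=
  Set.disjoint_left.2 fun _ hv hv' => h.2.2.1 <|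
    (h.1.subset_of_mem h.2.1 hv hv').antisymm (h.2.1.subset_of_mem h.1 hv' hv)

theorem not_adj (h : MinimallySeparates G S H H') : ∀ u ∈ H, ∀ v ∈ H', ¬ G.Adj u v :=
  fun u hu v hv huv => h.disjoint.ne_of_mem (h.1.2.2.1 u hu v (h.2.1.1 hv) huv) hv rfl

theorem exists_isInducedPathThrough (h : MinimallySeparates G S H H') {a b : V} (ha : a ∈ S)
    (hb : b ∈ S) (hab : a ≠ b) : ∃ m f, G.IsInducedPathThrough H a b m f :=
  SimpleGraph.exists_isInducedPathThrough h.1.2.1.preconnected (fun h' => h.1.1 h' ha)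
    (fun h' => h.1.1 h' hb) hab (h.2.2.2 a ha).1 (h.2.2.2 b hb).1

end MinimallySeparates

end

namespace SignedBigraph

open SimpleGraph

variable {V : Type u} {G : SignedBigraph V} {S H H' : Set V} {a b : V}

theorem side_eq_iff_even {f : ℕ → V} {m : ℕ} (hf : ∀ i < m, G.graph.Adj (f i) (f (i + 1))) :
    G.side (f m) = G.side (f 0) ↔ Even m := by
  induction m with
  | zero => simp
  | succ k ih =>
    have hk := G.bipartite (hf k k.lt_succ_self)
    rw [Nat.even_add_one, ← ih fun i hi => hf i (by omega)]
    revert hk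
    cases G.side (f k) <;> cases G.side (f (k + 1)) <;> simp

theorem _root_.SimpleGraph.IsInducedPathThrough.side_eq_iff_even {T : Set V} {m : ℕ}
    {f : ℕ → V} (hf : G.graph.IsInducedPathThrough T a b m f) : G.side b = G.side a ↔ Even m := by
  rw [← hf.apply_zero, ← hf.apply_length]
  exact SignedBigraph.side_eq_iff_even fun i hi => hf.adj_succ hi

/-- A member of `D` is an induced 6-cycle `c 0, …, c 5` of `G - c₀c₃` together with the negative
long diagonal `c₀c₃`. -/
theorem hasD_of_isInducedCycle {c : ℕ → V}
    (hc : (G.graph.deleteEdges {s(c 0, c 3)}).IsInducedCycle 6 c) (hadj : G.Adj (c 0) (c 3))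
    (hneg : G.sign (c 0) (c 3) = false) : G.HasD := by
  have key : ∀ i j, i < 6 → j < 6 → ¬ (i = 0 ∧ j = 3) → ¬ (i = 3 ∧ j = 0) →
      (G.Adj (c i) (c j) ↔ j = i + 1 ∨ i = j + 1 ∨ (i = 0 ∧ j + 1 = 6) ∨ (j = 0 ∧ i + 1 = 6)) := by
    intro i j hi hj h03 h30
    rw [← hc.adj_iff hi hj, deleteEdges_adj, Set.mem_singleton_iff, Sym2.eq_iff]
    refine (and_iff_left ?_).symm
    rintro (⟨h0, h3⟩ | ⟨h3, h0⟩)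
    · exact h03 ⟨hc.injOn hi (by simp) h0, hc.injOn hj (by simp) h3⟩
    · exact h30 ⟨hc.injOn hi (by simp) h3, hc.injOn hj (by simp) h0⟩
  refine ⟨c 2, c 0, c 4, c 1, c 3, c 5, ?_, (key 2 1 ?_ ?_ ?_ ?_).2 ?_, (key 1 0 ?_ ?_ ?_ ?_).2 ?_,
    (key 0 5 ?_ ?_ ?_ ?_).2 ?_, (key 5 4 ?_ ?_ ?_ ?_).2 ?_, (key 4 3 ?_ ?_ ?_ ?_).2 ?_,
    (key 3 2 ?_ ?_ ?_ ?_).2 ?_, hadj, hneg, ?_, ?_, ?_, ?_, ?_, ?_, ?_, ?_⟩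
  · show ([2, 0, 4, 1, 3, 5].map c).Pairwise (· ≠ ·)
    rw [List.pairwise_map]
    refine (by decide : [2, 0, 4, 1, 3, 5].Pairwise (· ≠ ·)).imp_of_mem fun hi hj hij => ?_
    simp only [List.mem_cons, List.not_mem_nil, or_false] at hi hj
    exact hc.injOn.ne (by simp; omega) (by simp; omega) hij
  all_goals first
    | decide
    | exact fun h => by simpa using (key _ _ (by decide) (by decide) (by decide) (by decide)).1 h

theorem adj_of_minimallySeparates (hC : ¬ G.HasLongCycle) (h : MinimallySeparates G.graph S H H')
    (ha : a ∈ S) (hb : b ∈ S) (hside : G.side a ≠ G.side b) : G.Adj a b := by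
  by_contra hab
  have hne : a ≠ b := fun h => hside (h ▸ rfl)
  obtain ⟨m, f, hf⟩ := h.exists_isInducedPathThrough ha hb hne
  obtain ⟨m', f', hf'⟩ := h.symm.exists_isInducedPathThrough ha hb hne
  have hodd := Nat.not_even_iff.1 fun he => hside (hf.side_eq_iff_even.2 he).symm
  have hodd' := Nat.not_even_iff.1 fun he => hside (hf'.side_eq_iff_even.2 he).symm
  have := hf.two_le
  have := hf'.two_le
  exact hC (hf.hasLongInducedCycle hf' h.disjoint h.not_adj hab (by omega))

theorem sign_eq_true_of_minimallySeparates (hC : ¬ G.HasLongCycle) (hD : ¬ G.HasD)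
    (h : MinimallySeparates G.graph S H H') (ha : a ∈ S) (hb : b ∈ S)
    (hside : G.side a ≠ G.side b) : G.sign a b = true := by
  have hab := adj_of_minimallySeparates hC h ha hb hside
  obtain ⟨m, f, hf⟩ := h.exists_isInducedPathThrough ha hb hab.ne
  obtain ⟨m', f', hf'⟩ := h.symm.exists_isInducedPathThrough ha hb hab.ne
  by_contra hneg
  rw [Bool.not_eq_true] at hneg
  have hthree : ∀ {T n g}, G.graph.IsInducedPathThrough T a b n g → n = 3 := fun hg => by
    have hodd := Nat.not_even_iff.1 fun he => hside (hg.side_eq_iff_even.2 he).symm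
    have := hg.two_le
    by_contra h3
    exact hC ((hg.isInducedCycle_of_adj hab).hasLongInducedCycle (by omega))
  obtain rfl := hthree hf
  obtain rfl := hthree hf'
  obtain ⟨c, hc, rfl, rfl⟩ := hf.exists_isInducedCycle hf' h.disjoint h.not_adj
  exact hD (hasD_of_isInducedCycle hc hab hneg)

theorem exists_adj_adj_of_minimallySeparates (hC : ¬ G.HasLongCycle)
    (h : MinimallySeparates G.graph S H H') (ha : a ∈ S) (hb : b ∈ S) (hab : a ≠ b)
    (hside : G.side a = G.side b) : ∃ c ∈ H, G.Adj a c ∧ G.Adj b c := by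
  obtain ⟨m, f, hf⟩ := h.exists_isInducedPathThrough ha hb hab
  obtain ⟨m', f', hf'⟩ := h.symm.exists_isInducedPathThrough ha hb hab
  have heven := Nat.even_iff.1 (hf.side_eq_iff_even.1 hside.symm)
  have := hf.two_le
  have := hf'.two_le
  rcases (by omega : m = 2 ∨ 6 ≤ m + m') with rfl | h6
  · obtain rfl := hf.apply_zero
    obtain rfl := hf.apply_length
    exact ⟨f 1, hf.mem 1 one_pos one_lt_two, hf.adj_succ two_pos, (hf.adj_succ one_lt_two).symm⟩
  · exact (hC (hf.hasLongInducedCycle hf' h.disjoint h.not_adj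
      (fun hadj => G.bipartite hadj hside) h6)).elim

end SignedBigraph

open SignedBigraph in
theorem minimallySeparating_positiveBiclique_general
    {V : Type u} (G : SignedBigraph V)
    (hC : ¬ G.HasLongCycle) (hD : ¬ G.HasD)
    (S H H' : Set V)
    (hmin : MinimallySeparates G.graph S H H') :
    (∀ a ∈ S, ∀ b ∈ S, G.side a ≠ G.side b → G.Adj a b ∧ G.sign a b = true) ∧
    (∀ a ∈ S, ∀ b ∈ S, a ≠ b → G.side a = G.side b →
      (∃ c ∈ H, G.Adj a c ∧ G.Adj b c) ∧ (∃ c ∈ H', G.Adj a c ∧ G.Adj b c)) :=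
  ⟨fun _ ha _ hb hside => ⟨adj_of_minimallySeparates hC hmin ha hb hside,
      sign_eq_true_of_minimallySeparates hC hD hmin ha hb hside⟩,
    fun _ ha _ hb hab hside => ⟨exists_adj_adj_of_minimallySeparates hC hmin ha hb hab hside,
      exists_adj_adj_of_minimallySeparates hC hmin.symm ha hb hab hside⟩⟩

open SignedBigraph in
/-- Lemma 4.1: in a signed separable bigraph with no induced
member of `𝒞 ∪ D`, a set `S` minimally separating the non-trivial components `H`
and `H'` induces a positive biclique, and any two vertices of `S` in the same
partite set have common neighbours in `H` and in `H'`. -/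
theorem minimallySeparating_positiveBiclique
    {V : Type u} (G : SignedBigraph V)
    (hsep : IsSeparableGraph G.graph)
    (hC : ¬ G.HasLongCycle) (hD : ¬ G.HasD)
    (S H H' : Set V)
    (hmin : MinimallySeparates G.graph S H H') :
    (∀ a ∈ S, ∀ b ∈ S, G.side a ≠ G.side b → G.Adj a b ∧ G.sign a b = true) ∧
    (∀ a ∈ S, ∀ b ∈ S, a ≠ b → G.side a = G.side b →
      (∃ c ∈ H, G.Adj a c ∧ G.Adj b c) ∧ (∃ c ∈ H', G.Adj a c ∧ G.Adj b c)) :=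
  minimallySeparating_positiveBiclique_general G hC hD S H H' hmin
end
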